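/- arXiv:2207.02748 — 9 statements merged into one kernel-verified Lean document; each statement's English description precedes it below -/
import Mathlib

section
/- For every integer k ≥ 2, the following identity of real polynomials in one variable x holds: (1/(2^k · k · (k-1))) · Σ_{ℓ=0}^{k} C(k,ℓ) · (k-2ℓ)^2 · (1+x)^{k-ℓ} · (1-x)^{ℓ} = x^2 + 1/(k-1). -/
/-!
Substituting `x = 1 - 2t` turns `(1 + x)^(k-ℓ) (1 - x)^ℓ` into `2^k` times the Bernstein
polynomial `C(k,ℓ) t^ℓ (1-t)^(k-ℓ)`, i.e. the binomial distribution with parameter `t`.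
Writing `k - 2ℓ = 2(kt - ℓ) + kx`, the sum becomes
`4 Var + (kx)^2 = 4kt(1-t) + k^2 x^2 = k + k(k-1) x^2`.
-/

open Polynomial

theorem bernsteinPolynomial_sum_sq_sub_two_mul (R : Type*) [CommRing R] (n : ℕ) :
    ∑ ν ∈ Finset.range (n + 1), ((n : R[X]) - 2 * (ν : R[X])) ^ 2 * bernsteinPolynomial R n ν
      = (n : R[X]) + n * (n - 1) * (1 - 2 * (X : R[X])) ^ 2 := by
  have mean : ∑ ν ∈ Finset.range (n + 1), (ν : R[X]) * bernsteinPolynomial R n ν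
      = n * (X : R[X]) := by
    simpa only [nsmul_eq_mul] using bernsteinPolynomial.sum_smul R n
  -- `n - 2ν = 2 (nX - ν) + n (1 - 2X)`: expand around the mean `nX`
  calc _ = ∑ ν ∈ Finset.range (n + 1),
        (4 * ((n • (X : R[X]) - (ν : R[X])) ^ 2 * bernsteinPolynomial R n ν)
          + (4 * (n : R[X]) * (1 - 2 * X) * ((n : R[X]) * X) + (n : R[X]) ^ 2 * (1 - 2 * X) ^ 2)
            * bernsteinPolynomial R n ν
          - 4 * (n : R[X]) * (1 - 2 * X) * ((ν : R[X]) * bernsteinPolynomial R n ν)) :=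
        Finset.sum_congr rfl fun ν _ => by rw [nsmul_eq_mul]; ring
    _ = _ := by
      rw [Finset.sum_sub_distrib, Finset.sum_add_distrib, ← Finset.mul_sum, ← Finset.mul_sum,
        ← Finset.mul_sum, bernsteinPolynomial.variance, bernsteinPolynomial.sum, mean,
        nsmul_eq_mul]
      ring

theorem sum_choose_mul_sq_sub_two_mul {R : Type*} [CommRing R] (t : R) (n : ℕ) :
    ∑ ν ∈ Finset.range (n + 1),
        (n.choose ν : R) * ((n : R) - 2 * ν) ^ 2 * t ^ ν * (1 - t) ^ (n - ν)
      = n + n * (n - 1) * (1 - 2 * t) ^ 2 := by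
  have h := congrArg (eval t) (bernsteinPolynomial_sum_sq_sub_two_mul R n)
  simp only [eval_finsetSum, bernsteinPolynomial] at h
  simpa [mul_assoc, mul_left_comm] using h

theorem sum_choose_mul_sq_sub_two_mul_one_add_pow_mul_one_sub_pow {K : Type*} [Field K]
    [NeZero (2 : K)] (x : K) (n : ℕ) :
    ∑ ν ∈ Finset.range (n + 1),
        (n.choose ν : K) * ((n : K) - 2 * ν) ^ 2 * (1 + x) ^ (n - ν) * (1 - x) ^ ν
      = 2 ^ n * (n + n * (n - 1) * x ^ 2) := by
  obtain ⟨t, rfl⟩ : ∃ t : K, x = 1 - 2 * t := ⟨(1 - x) / 2, by field_simp; ring⟩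
  rw [← sum_choose_mul_sq_sub_two_mul t n, Finset.mul_sum]
  refine Finset.sum_congr rfl fun ν hν => ?_
  rw [show 1 + (1 - 2 * t) = 2 * (1 - t) by ring, show 1 - (1 - 2 * t) = 2 * t by ring,
    mul_pow, mul_pow, ← pow_sub_mul_pow 2 (Finset.mem_range_succ_iff.mp hν)]
  ring

theorem stmt_0 (k : ℕ) (hk : 2 ≤ k) :
    C (1 / (2 ^ k * (k : ℝ) * ((k : ℝ) - 1))) *
      ∑ ℓ ∈ Finset.range (k + 1),
        C ((k.choose ℓ : ℝ) * ((k : ℝ) - 2 * (ℓ : ℝ)) ^ 2) *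
          (1 + X) ^ (k - ℓ) * (1 - X) ^ ℓ
    = X ^ 2 + C (1 / ((k : ℝ) - 1)) := by
  have hk0 : (k : ℝ) ≠ 0 := by positivity
  have hk1 : (k : ℝ) - 1 ≠ 0 := by
    rw [sub_ne_zero]; exact_mod_cast (by omega : k ≠ 1)
  refine Polynomial.funext fun x => ?_
  simp only [eval_mul, eval_C, eval_finsetSum, eval_pow, eval_add, eval_sub, eval_one, eval_X]
  rw [sum_choose_mul_sq_sub_two_mul_one_add_pow_mul_one_sub_pow]
  field_simp
  ring
end

section
/- Let S be a semiring of a commutative unital ℝ-algebra A. Then the set A^bd(S) of S-bounded elements, consisting of all a ∈ A such that there exists λ > 0 with λ·1 - a ∈ S and λ·1 + a ∈ S, is a unital subalgebra of A. -/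
/-!
The bounds `l • 1 ± a ∈ S` add up under `+`, and for products the identity
`(l • 1 - a) * (m • 1 + b) + (l • 1 + a) * (m • 1 - b) = 2 • ((l * m) • 1 - a * b)`
writes `(l * m) • 1 - a * b` as half a sum of products of elements of `S`; replacing `b` by `-b`
gives the other bound. Scalars `r` are bounded by `|r| + 1`.
-/

section BoundedElements

variable {A : Type*} [CommRing A] [Algebra ℝ A]

/-- The `S`-bounded elements `A^bd(S)`. -/
def boundedElements (S : Set A) : Set A :=
  {a : A | ∃ l : ℝ, 0 < l ∧ l • (1 : A) - a ∈ S ∧ l • (1 : A) + a ∈ S}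

variable {S : Set A}

theorem algebraMap_mem_boundedElements (hone : (1 : A) ∈ S)
    (hsmul : ∀ r : ℝ, 0 ≤ r → ∀ x ∈ S, r • x ∈ S) (r : ℝ) :
    algebraMap ℝ A r ∈ boundedElements S := by
  refine ⟨|r| + 1, by positivity, ?_, ?_⟩
  · rw [Algebra.algebraMap_eq_smul_one, ← sub_smul]
    exact hsmul _ (by linarith [le_abs_self r]) _ hone
  · rw [Algebra.algebraMap_eq_smul_one, ← add_smul]
    exact hsmul _ (by linarith [neg_abs_le r]) _ hone

theorem add_mem_boundedElements (hadd : ∀ x ∈ S, ∀ y ∈ S, x + y ∈ S) {a b : A}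
    (ha : a ∈ boundedElements S) (hb : b ∈ boundedElements S) :
    a + b ∈ boundedElements S := by
  obtain ⟨l, hl, hla, hla'⟩ := ha
  obtain ⟨m, hm, hmb, hmb'⟩ := hb
  refine ⟨l + m, add_pos hl hm, ?_, ?_⟩
  · convert hadd _ hla _ hmb using 1
    rw [add_smul]; abel
  · convert hadd _ hla' _ hmb' using 1
    rw [add_smul]; abel

theorem smul_one_sub_mul_mem (hadd : ∀ x ∈ S, ∀ y ∈ S, x + y ∈ S)
    (hsmul : ∀ r : ℝ, 0 ≤ r → ∀ x ∈ S, r • x ∈ S) (hmul : ∀ x ∈ S, ∀ y ∈ S, x * y ∈ S)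
    {a b : A} {l m : ℝ} (hla : l • (1 : A) - a ∈ S) (hla' : l • (1 : A) + a ∈ S)
    (hmb : m • (1 : A) - b ∈ S) (hmb' : m • (1 : A) + b ∈ S) :
    (l * m) • (1 : A) - a * b ∈ S := by
  have hsum := hadd _ (hmul _ hla _ hmb') _ (hmul _ hla' _ hmb)
  have hidentity : (l • (1 : A) - a) * (m • (1 : A) + b) + (l • (1 : A) + a) * (m • (1 : A) - b)
      = (2 : ℝ) • ((l * m) • (1 : A) - a * b) := by
    simp only [Algebra.smul_def, map_ofNat, map_mul]
    ring
  rw [hidentity] at hsum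
  simpa [smul_smul] using hsmul (1 / 2) (by norm_num) _ hsum

theorem mul_mem_boundedElements (hadd : ∀ x ∈ S, ∀ y ∈ S, x + y ∈ S)
    (hsmul : ∀ r : ℝ, 0 ≤ r → ∀ x ∈ S, r • x ∈ S) (hmul : ∀ x ∈ S, ∀ y ∈ S, x * y ∈ S)
    {a b : A} (ha : a ∈ boundedElements S) (hb : b ∈ boundedElements S) :
    a * b ∈ boundedElements S := by
  obtain ⟨l, hl, hla, hla'⟩ := ha
  obtain ⟨m, hm, hmb, hmb'⟩ := hb
  refine ⟨l * m, mul_pos hl hm, smul_one_sub_mul_mem hadd hsmul hmul hla hla' hmb hmb', ?_⟩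
  have hmb_neg : m • (1 : A) + -b ∈ S := by rwa [← sub_eq_add_neg]
  have hmb'_neg : m • (1 : A) - -b ∈ S := by rwa [sub_neg_eq_add]
  simpa using smul_one_sub_mul_mem hadd hsmul hmul hla hla' hmb'_neg hmb_neg

def boundedSubalgebra (hone : (1 : A) ∈ S) (hadd : ∀ x ∈ S, ∀ y ∈ S, x + y ∈ S)
    (hsmul : ∀ r : ℝ, 0 ≤ r → ∀ x ∈ S, r • x ∈ S) (hmul : ∀ x ∈ S, ∀ y ∈ S, x * y ∈ S) :
    Subalgebra ℝ A where
  carrier := boundedElements S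
  mul_mem' := mul_mem_boundedElements hadd hsmul hmul
  add_mem' := add_mem_boundedElements hadd
  algebraMap_mem' := algebraMap_mem_boundedElements hone hsmul

end BoundedElements

theorem stmt_2 {A : Type*} [CommRing A] [Algebra ℝ A] (S : Set A)
    (hone : (1 : A) ∈ S)
    (hadd : ∀ x ∈ S, ∀ y ∈ S, x + y ∈ S)
    (hsmul : ∀ r : ℝ, 0 ≤ r → ∀ x ∈ S, r • x ∈ S)
    (hmul : ∀ x ∈ S, ∀ y ∈ S, x * y ∈ S) :
    ∃ B : Subalgebra ℝ A,
      (B : Set A) =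
        {a : A | ∃ l : ℝ, 0 < l ∧ l • (1 : A) - a ∈ S ∧ l • (1 : A) + a ∈ S} :=
  ⟨boundedSubalgebra hone hadd hsmul hmul, rfl⟩
end

section
/- Let S be a semiring of a commutative unital ℝ-algebra A, and suppose the algebra A is generated by elements (a_j)_{j∈J} together with 1. If for every j ∈ J there exist α_j > 0 and β_j > 0 with α_j·1 + a_j ∈ S and β_j·1 - a_j ∈ S, then S is Archimedean, i.e., for every a ∈ A there exists λ > 0 with λ·1 - a ∈ S and λ·1 + a ∈ S. -/
/-!
The elements `x` with `l • 1 ± x ∈ S` for some `l > 0` form an `ℝ`-subalgebra of `A`: the only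
nontrivial closure property is under products, which comes from the identity
`(l - x)(m + y) + (l + x)(m - y) = 2 (l m - x y)` (and its analogue with `+ x y`), whose left side
lies in `S`. An `ℝ`-subalgebra containing the generators `a j` is all of `A`.

A semiring of `A` in the sense of the paper is precisely a `Subalgebra ℝ≥0 A`.
-/

open scoped NNReal

namespace Subalgebra

variable {A : Type*} [CommRing A] [Algebra ℝ A] (T : Subalgebra ℝ≥0 A)

theorem real_smul_mem {r : ℝ} (hr : 0 ≤ r) {x : A} (hx : x ∈ T) : r • x ∈ T :=
  T.smul_mem hx ⟨r, hr⟩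

theorem real_smul_one_mem {r : ℝ} (hr : 0 ≤ r) : r • (1 : A) ∈ T :=
  T.real_smul_mem hr T.one_mem

variable {T}

theorem smul_one_add_mem_of_le {l m : ℝ} {y : A} (h : l • (1 : A) + y ∈ T) (hlm : l ≤ m) :
    m • (1 : A) + y ∈ T := by
  have hsplit : m • (1 : A) + y = (m - l) • (1 : A) + (l • (1 : A) + y) := by
    rw [sub_smul]; abel
  rw [hsplit]
  exact T.add_mem (T.real_smul_one_mem (sub_nonneg.2 hlm)) h

theorem smul_one_sub_mem_of_le {l m : ℝ} {y : A} (h : l • (1 : A) - y ∈ T) (hlm : l ≤ m) :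
    m • (1 : A) - y ∈ T := by
  rw [sub_eq_add_neg] at h ⊢
  exact smul_one_add_mem_of_le h hlm

/-- The set `A^bd(T)`. -/
def boundedElements (T : Subalgebra ℝ≥0 A) : Set A :=
  {x | ∃ l : ℝ, 0 < l ∧ l • (1 : A) - x ∈ T ∧ l • (1 : A) + x ∈ T}

theorem mem_boundedElements_of_bounds {x : A} {l m : ℝ} (hl : l • (1 : A) - x ∈ T)
    (hm : m • (1 : A) + x ∈ T) : x ∈ T.boundedElements :=
  ⟨max (max l m) 1, by positivity,
    smul_one_sub_mem_of_le hl ((le_max_left _ _).trans (le_max_left _ _)),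
    smul_one_add_mem_of_le hm ((le_max_right _ _).trans (le_max_left _ _))⟩

theorem algebraMap_mem_boundedElements (r : ℝ) : algebraMap ℝ A r ∈ T.boundedElements := by
  refine mem_boundedElements_of_bounds (l := r) (m := -r) ?_ ?_ <;>
    simp only [Algebra.algebraMap_eq_smul_one, neg_smul, sub_self, neg_add_cancel, T.zero_mem]

theorem add_mem_boundedElements {x y : A} (hx : x ∈ T.boundedElements)
    (hy : y ∈ T.boundedElements) : x + y ∈ T.boundedElements := by
  obtain ⟨l, hl, hlx, hlx'⟩ := hx
  obtain ⟨m, hm, hmy, hmy'⟩ := hy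
  refine ⟨l + m, add_pos hl hm, ?_, ?_⟩
  · convert T.add_mem hlx hmy using 1; rw [add_smul]; abel
  · convert T.add_mem hlx' hmy' using 1; rw [add_smul]; abel

theorem mem_of_two_smul_mem {z : A} (h : (2 : ℝ) • z ∈ T) : z ∈ T := by
  simpa only [smul_smul, inv_mul_cancel₀ (two_ne_zero' ℝ), one_smul] using
    T.real_smul_mem (inv_nonneg.2 zero_le_two) h

theorem mul_mem_boundedElements {x y : A} (hx : x ∈ T.boundedElements)
    (hy : y ∈ T.boundedElements) : x * y ∈ T.boundedElements := by
  obtain ⟨l, hl, hlx, hlx'⟩ := hx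
  obtain ⟨m, hm, hmy, hmy'⟩ := hy
  refine ⟨l * m, mul_pos hl hm, mem_of_two_smul_mem ?_, mem_of_two_smul_mem ?_⟩
  · convert T.add_mem (T.mul_mem hlx hmy') (T.mul_mem hlx' hmy) using 1
    simp only [Algebra.smul_def, map_mul, map_ofNat]; ring
  · convert T.add_mem (T.mul_mem hlx hmy) (T.mul_mem hlx' hmy') using 1
    simp only [Algebra.smul_def, map_mul, map_ofNat]; ring

variable (T) in
def boundedSubalgebra : Subalgebra ℝ A where
  carrier := T.boundedElements
  mul_mem' := mul_mem_boundedElements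
  add_mem' := add_mem_boundedElements
  algebraMap_mem' := algebraMap_mem_boundedElements

theorem boundedSubalgebra_eq_top_of_adjoin_eq_top {s : Set A} (hs : Algebra.adjoin ℝ s = ⊤)
    (hbd : s ⊆ T.boundedElements) : T.boundedSubalgebra = ⊤ :=
  top_le_iff.1 (hs ▸ Algebra.adjoin_le hbd)

end Subalgebra

theorem stmt_3 {A : Type*} [CommRing A] [Algebra ℝ A] (S : Set A)
    (hone : (1 : A) ∈ S)
    (hadd : ∀ x ∈ S, ∀ y ∈ S, x + y ∈ S)
    (hsmul : ∀ r : ℝ, 0 ≤ r → ∀ x ∈ S, r • x ∈ S)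
    (hmul : ∀ x ∈ S, ∀ y ∈ S, x * y ∈ S)
    {J : Type*} (a : J → A)
    (hgen : Algebra.adjoin ℝ (Set.range a) = ⊤)
    (hbd : ∀ j : J, ∃ α β : ℝ, 0 < α ∧ 0 < β ∧
      α • (1 : A) + a j ∈ S ∧ β • (1 : A) - a j ∈ S) :
    ∀ x : A, ∃ l : ℝ, 0 < l ∧ l • (1 : A) - x ∈ S ∧ l • (1 : A) + x ∈ S := by
  let T : Subalgebra ℝ≥0 A :=
    { carrier := S
      mul_mem' := fun hx hy => hmul _ hx _ hy
      add_mem' := fun hx hy => hadd _ hx _ hy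
      algebraMap_mem' := fun r => by
        simpa only [Algebra.algebraMap_eq_smul_one, NNReal.smul_def] using hsmul r r.2 1 hone }
  have hgen_bd : Set.range a ⊆ T.boundedElements := by
    rintro _ ⟨j, rfl⟩
    obtain ⟨α, β, -, -, hα, hβ⟩ := hbd j
    exact Subalgebra.mem_boundedElements_of_bounds hβ hα
  intro x
  have hx : x ∈ T.boundedSubalgebra := by
    rw [Subalgebra.boundedSubalgebra_eq_top_of_adjoin_eq_top hgen hgen_bd]
    exact Algebra.mem_top
  exact hx
end

section
/- Let S be a generating semiring of a commutative unital ℝ-algebra A (i.e., S - S = A) and let C be an S-module. Then S† is again a generating semiring of A and C† is an S†-module, where X† := {a ∈ A : ∃x ∈ X such that a + εx ∈ X for all ε > 0}. -/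
/-!
If `a + ε • x ∈ S` and `c + ε • y ∈ C` for all `ε > 0`, multiplying out gives
`(a + ε • x) * (c + ε • y) + (ε * (2 - ε)) • (x * y) = a * c + ε • w` with
`w = (a + x) * y + x * (c + y) ∈ C`, so `a * c + ε • w ∈ C` for `0 < ε ≤ 2`; larger `ε` are reached
by adding nonnegative multiples of `w`. The cone properties of `X†` are immediate, and
`X ⊆ X†` (witness `x = a`) makes `S†` generating.
-/

section Module

variable {M : Type*} [AddCommMonoid M] [Module ℝ M] {T : Set M}

def dagger (T : Set M) : Set M :=
  {a | ∃ x ∈ T, ∀ ε : ℝ, 0 < ε → a + ε • x ∈ T}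

theorem subset_dagger (hsmul : ∀ r : ℝ, 0 ≤ r → ∀ x ∈ T, r • x ∈ T) : T ⊆ dagger T := by
  intro a ha
  refine ⟨a, ha, fun ε hε => ?_⟩
  have h := hsmul (1 + ε) (by linarith) a ha
  rwa [add_smul, one_smul] at h

theorem add_mem_dagger (hadd : ∀ x ∈ T, ∀ y ∈ T, x + y ∈ T) {a b : M}
    (ha : a ∈ dagger T) (hb : b ∈ dagger T) : a + b ∈ dagger T := by
  obtain ⟨x, hx, hax⟩ := ha
  obtain ⟨y, hy, hby⟩ := hb
  refine ⟨x + y, hadd _ hx _ hy, fun ε hε => ?_⟩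
  rw [smul_add, add_add_add_comm]
  exact hadd _ (hax ε hε) _ (hby ε hε)

theorem smul_mem_dagger (hsmul : ∀ r : ℝ, 0 ≤ r → ∀ x ∈ T, r • x ∈ T) {r : ℝ} (hr : 0 ≤ r)
    {a : M} (ha : a ∈ dagger T) : r • a ∈ dagger T := by
  obtain ⟨x, hx, hax⟩ := ha
  refine ⟨r • x, hsmul r hr x hx, fun ε hε => ?_⟩
  rw [smul_comm, ← smul_add]
  exact hsmul r hr _ (hax ε hε)

theorem mem_dagger_of_forall_le (hadd : ∀ x ∈ T, ∀ y ∈ T, x + y ∈ T)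
    (hsmul : ∀ r : ℝ, 0 ≤ r → ∀ x ∈ T, r • x ∈ T) {a w : M} (hw : w ∈ T) {δ : ℝ} (hδ : 0 < δ)
    (h : ∀ ε : ℝ, 0 < ε → ε ≤ δ → a + ε • w ∈ T) : a ∈ dagger T := by
  refine ⟨w, hw, fun ε hε => ?_⟩
  have hsplit : a + ε • w = (a + min ε δ • w) + (ε - min ε δ) • w := by
    rw [add_assoc, ← add_smul, add_sub_cancel]
  rw [hsplit]
  exact hadd _ (h _ (lt_min hε hδ) (min_le_right _ _)) _
    (hsmul _ (sub_nonneg.2 (min_le_left _ _)) _ hw)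

end Module

theorem mul_mem_dagger {A : Type*} [Ring A] [Algebra ℝ A] {S C : Set A}
    (hCadd : ∀ x ∈ C, ∀ y ∈ C, x + y ∈ C)
    (hCsmul : ∀ r : ℝ, 0 ≤ r → ∀ x ∈ C, r • x ∈ C)
    (hSC : ∀ s ∈ S, ∀ c ∈ C, s * c ∈ C) {a c : A}
    (ha : a ∈ dagger S) (hc : c ∈ dagger C) : a * c ∈ dagger C := by
  obtain ⟨x, hx, hax⟩ := ha
  obtain ⟨y, hy, hcy⟩ := hc
  have hax₁ : a + x ∈ S := by simpa using hax 1 one_pos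
  have hcy₁ : c + y ∈ C := by simpa using hcy 1 one_pos
  refine mem_dagger_of_forall_le hCadd hCsmul
    (hCadd _ (hSC _ hax₁ _ hy) _ (hSC _ hx _ hcy₁)) two_pos fun ε hε hε₂ => ?_
  have hexpand : a * c + ε • ((a + x) * y + x * (c + y)) =
      (a + ε • x) * (c + ε • y) + (ε * (2 - ε)) • (x * y) := by
    simp only [mul_add, add_mul, smul_mul_assoc, mul_smul_comm, smul_smul, smul_add]
    module
  rw [hexpand]
  exact hCadd _ (hSC _ (hax ε hε) _ (hcy ε hε)) _
    (hCsmul _ (mul_nonneg hε.le (by linarith)) _ (hSC _ hx _ hy))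

theorem stmt_5 {A : Type*} [CommRing A] [Algebra ℝ A] (S C : Set A)
    (hSone : (1 : A) ∈ S)
    (hSadd : ∀ x ∈ S, ∀ y ∈ S, x + y ∈ S)
    (hSsmul : ∀ r : ℝ, 0 ≤ r → ∀ x ∈ S, r • x ∈ S)
    (hSmul : ∀ x ∈ S, ∀ y ∈ S, x * y ∈ S)
    (hgen : ∀ a : A, ∃ x ∈ S, ∃ y ∈ S, a = x - y)
    (hCone : (1 : A) ∈ C)
    (hCadd : ∀ x ∈ C, ∀ y ∈ C, x + y ∈ C)
    (hCsmul : ∀ r : ℝ, 0 ≤ r → ∀ x ∈ C, r • x ∈ C)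
    (hSC : ∀ s ∈ S, ∀ c ∈ C, s * c ∈ C) :
    (let Sd : Set A := {a : A | ∃ x ∈ S, ∀ ε : ℝ, 0 < ε → a + ε • x ∈ S}
     let Cd : Set A := {a : A | ∃ x ∈ C, ∀ ε : ℝ, 0 < ε → a + ε • x ∈ C}
     ((1 : A) ∈ Sd ∧ (∀ x ∈ Sd, ∀ y ∈ Sd, x + y ∈ Sd) ∧
        (∀ r : ℝ, 0 ≤ r → ∀ x ∈ Sd, r • x ∈ Sd) ∧
        (∀ x ∈ Sd, ∀ y ∈ Sd, x * y ∈ Sd) ∧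
        (∀ a : A, ∃ x ∈ Sd, ∃ y ∈ Sd, a = x - y)) ∧
      ((1 : A) ∈ Cd ∧ (∀ x ∈ Cd, ∀ y ∈ Cd, x + y ∈ Cd) ∧
        (∀ r : ℝ, 0 ≤ r → ∀ x ∈ Cd, r • x ∈ Cd) ∧
        (∀ s ∈ Sd, ∀ c ∈ Cd, s * c ∈ Cd))) := by
  have hgen_dagger (a : A) : ∃ x ∈ dagger S, ∃ y ∈ dagger S, a = x - y := by
    obtain ⟨x, hx, y, hy, rfl⟩ := hgen a
    exact ⟨x, subset_dagger hSsmul hx, y, subset_dagger hSsmul hy, rfl⟩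
  exact ⟨⟨subset_dagger hSsmul hSone, fun _ hx _ hy => add_mem_dagger hSadd hx hy,
      fun _ hr _ hx => smul_mem_dagger hSsmul hr hx,
      fun _ hx _ hy => mul_mem_dagger hSadd hSsmul hSmul hx hy, hgen_dagger⟩,
    subset_dagger hCsmul hCone, fun _ hx _ hy => add_mem_dagger hCadd hx hy,
    fun _ hr _ hx => smul_mem_dagger hCsmul hr hx,
    fun _ hs _ hc => mul_mem_dagger hCadd hCsmul hSC hs hc⟩
end

section
/- Let S be an Archimedean semiring of a commutative unital ℝ-algebra A. Then for every a ∈ A and every ε > 0, the element a² + ε·1 belongs to S; consequently a² ∈ S† for all a ∈ A. -/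
/-!
Replacing `a` by `a / l`, we may assume `1 - b, 1 + b ∈ S`. Put `u = 1 - b`, `v = 1 + b`, so that
`u + v = 2` and `b ^ 2 + ε = (1 + ε) - u v`. Multiplying by `2 ^ (m + 2) = (u + v) ^ (m + 2)` gives
`(1 + ε) (u + v) ^ (m + 2) - 4 u v (u + v) ^ m`, whose coefficient on `u ^ (j + 1) v ^ (m + 1 - j)`
is `(1 + ε) C(m + 2, j + 1) - 4 C(m, j)`. This is nonnegative once `ε (m + 1) ≥ 1`, so the whole
expression is a nonnegative combination of products of `u` and `v`, hence lies in `S`.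
-/

open Finset

theorem choose_mul_succ_mul_succ_succ (m j : ℕ) (hj : j ≤ m) :
    m.choose j * (m + 1) * (m + 2) = (m + 2).choose (j + 1) * (j + 1) * (m + 1 - j) := by
  have h₁ := Nat.add_one_mul_choose_eq m j
  have h₂ := Nat.choose_mul_succ_eq (m + 1) (j + 1)
  rw [show m + 1 + 1 - (j + 1) = m + 1 - j by omega] at h₂
  calc m.choose j * (m + 1) * (m + 2) = (m + 1).choose (j + 1) * (m + 2) * (j + 1) := by
        rw [mul_comm _ (m + 1), h₁]; ring
    _ = _ := by rw [h₂]; ring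

theorem four_mul_choose_le (ε : ℝ) (m j : ℕ) (hm : 1 ≤ ε * (m + 1)) :
    4 * (m.choose j : ℝ) ≤ (1 + ε) * ((m + 2).choose (j + 1) : ℝ) := by
  have hm0 : (0 : ℝ) ≤ m := Nat.cast_nonneg _
  have hε : 0 < ε := by
    by_contra! h; nlinarith
  rcases le_or_gt j m with hj | hj
  · have key : (m.choose j : ℝ) * (m + 1) * (m + 2) =
        (m + 2).choose (j + 1) * (j + 1) * (m + 1 - j) := by
      have := congrArg (Nat.cast : ℕ → ℝ) (choose_mul_succ_mul_succ_succ m j hj)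
      push_cast [Nat.cast_sub (by omega : j ≤ m + 1)] at this
      exact this
    have hjm : (j : ℝ) ≤ m := by exact_mod_cast hj
    have hC : (0 : ℝ) ≤ (m + 2).choose (j + 1) := Nat.cast_nonneg _
    -- `4 (j + 1) (m + 1 - j) ≤ (m + 2)² ≤ (1 + ε) (m + 1) (m + 2)` by AM–GM and `hm`
    have amgm : 4 * ((j : ℝ) + 1) * (m + 1 - j) ≤ (1 + ε) * (m + 1) * (m + 2) := by
      nlinarith [sq_nonneg ((m : ℝ) - 2 * j)]
    have hpos : (0 : ℝ) < (m + 1) * (m + 2) := by positivity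
    refine le_of_mul_le_mul_right ?_ hpos
    nlinarith [mul_le_mul_of_nonneg_left amgm hC]
  · rw [Nat.choose_eq_zero_of_lt hj, Nat.cast_zero, mul_zero]
    positivity

theorem smul_add_pow_sub_four_mul_mul_add_pow {A : Type*} [CommRing A] [Algebra ℝ A]
    (c : ℝ) (u v : A) (m : ℕ) :
    c • (u + v) ^ (m + 2) - 4 * (u * v * (u + v) ^ m) =
      c • v ^ (m + 2) + c • u ^ (m + 2) + ∑ p ∈ antidiagonal m,
        (c * (m + 2).choose (p.1 + 1) - 4 * m.choose p.1) • (u ^ (p.1 + 1) * v ^ (p.2 + 1)) := by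
  rw [(Commute.all u v).add_pow', (Commute.all u v).add_pow', Nat.sum_antidiagonal_succ,
    Nat.sum_antidiagonal_succ', mul_sum, mul_sum, smul_add, smul_add, smul_sum, ← add_assoc,
    add_sub_assoc, ← sum_sub_distrib]
  congr 1
  · simp
  · refine sum_congr rfl fun p _ => ?_
    simp only [Algebra.smul_def, eq_natCast, map_sub, map_mul, map_natCast, map_ofNat]
    ring

section

variable {A : Type*} [CommRing A] [Algebra ℝ A] (S : Subsemiring A)
  (hsmul : ∀ r : ℝ, 0 ≤ r → ∀ x ∈ S, r • x ∈ S)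
include hsmul

theorem smul_add_pow_sub_four_mul_mul_add_pow_mem {c : ℝ} (hc : 0 ≤ c) {m : ℕ}
    (hcoeff : ∀ j, 4 * (m.choose j : ℝ) ≤ c * (m + 2).choose (j + 1))
    {u v : A} (hu : u ∈ S) (hv : v ∈ S) :
    c • (u + v) ^ (m + 2) - 4 * (u * v * (u + v) ^ m) ∈ S := by
  rw [smul_add_pow_sub_four_mul_mul_add_pow]
  refine add_mem (add_mem ?_ ?_) (sum_mem fun p _ => hsmul _ ?_ _ ?_)
  · exact hsmul c hc _ (pow_mem hv _)
  · exact hsmul c hc _ (pow_mem hu _)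
  · linarith [hcoeff p.1]
  · exact mul_mem (pow_mem hu _) (pow_mem hv _)

theorem sq_add_smul_one_mem_of_one_sub_mem {b : A} (h₁ : 1 - b ∈ S) (h₂ : 1 + b ∈ S)
    {ε : ℝ} (hε : 0 < ε) : b ^ 2 + ε • (1 : A) ∈ S := by
  set m := ⌈ε⁻¹⌉₊
  have hm : 1 ≤ ε * (m + 1) := by
    have := Nat.le_ceil ε⁻¹
    rw [← div_le_iff₀' hε, one_div]
    linarith
  have hmem := smul_add_pow_sub_four_mul_mul_add_pow_mem S hsmul (by positivity : 0 ≤ 1 + ε)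
    (four_mul_choose_le ε m · hm) h₁ h₂
  have hscale : (1 + ε) • ((1 - b) + (1 + b)) ^ (m + 2) -
      4 * ((1 - b) * (1 + b) * ((1 - b) + (1 + b)) ^ m) =
        (2 ^ (m + 2) : ℝ) • (b ^ 2 + ε • (1 : A)) := by
    simp only [Algebra.smul_def, map_add, map_one, map_pow, map_ofNat]
    ring
  rw [hscale] at hmem
  simpa [smul_smul] using hsmul (2 ^ (m + 2))⁻¹ (by positivity) _ hmem

theorem sq_add_smul_one_mem {a : A} {l : ℝ} (hl : 0 < l) (h₁ : l • 1 - a ∈ S)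
    (h₂ : l • 1 + a ∈ S) {ε : ℝ} (hε : 0 < ε) : a ^ 2 + ε • (1 : A) ∈ S := by
  have hl' : l⁻¹ • l • (1 : A) = 1 := inv_smul_smul₀ hl.ne' 1
  have hb := sq_add_smul_one_mem_of_one_sub_mem S hsmul (b := l⁻¹ • a)
    (by simpa [smul_sub, hl'] using hsmul l⁻¹ (by positivity) _ h₁)
    (by simpa [smul_add, hl'] using hsmul l⁻¹ (by positivity) _ h₂) (ε := ε / l ^ 2) (by positivity)
  convert hsmul (l ^ 2) (by positivity) _ hb using 1
  rw [smul_add, smul_pow, smul_smul, smul_smul, ← mul_pow, mul_inv_cancel₀ hl.ne', one_pow,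
    one_smul, mul_div_cancel₀ _ (by positivity)]

end

theorem stmt_6 {A : Type*} [CommRing A] [Algebra ℝ A] (S : Set A)
    (hone : (1 : A) ∈ S)
    (hadd : ∀ x ∈ S, ∀ y ∈ S, x + y ∈ S)
    (hsmul : ∀ r : ℝ, 0 ≤ r → ∀ x ∈ S, r • x ∈ S)
    (hmul : ∀ x ∈ S, ∀ y ∈ S, x * y ∈ S)
    (harch : ∀ a : A, ∃ l : ℝ, 0 < l ∧ l • (1 : A) - a ∈ S ∧ l • (1 : A) + a ∈ S) :
    ∀ a : A, (∀ ε : ℝ, 0 < ε → a ^ 2 + ε • (1 : A) ∈ S) ∧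
      a ^ 2 ∈ {x : A | ∀ ε : ℝ, 0 < ε → x + ε • (1 : A) ∈ S} := by
  let T : Subsemiring A :=
    { carrier := S
      one_mem' := hone
      mul_mem' := fun hx hy => hmul _ hx _ hy
      zero_mem' := by simpa using hsmul 0 le_rfl 1 hone
      add_mem' := fun hx hy => hadd _ hx _ hy }
  intro a
  obtain ⟨l, hl, h₁, h₂⟩ := harch a
  have h : ∀ ε : ℝ, 0 < ε → a ^ 2 + ε • (1 : A) ∈ S := fun ε hε =>
    sq_add_smul_one_mem T hsmul hl h₁ h₂ hε
  exact ⟨h, h⟩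
end

section
/- Let S be a semiring of a commutative unital ℝ-algebra A. Suppose A is generated as an algebra by finitely many elements y_1,...,y_n, and there exist a_1,...,a_n ∈ S with a_j - y_j ∈ S and a_j + y_j ∈ S for all j. Then S is generating (S - S = A) and s := 1 + Σ_{j=1}^n a_j is cofinal in A, i.e., for every a ∈ A there exist λ > 0 and k ∈ ℕ with λ s^k - a ∈ S. -/
/-!
Call `x` dominated by `p` when `p - x` and `p + x` both lie in `S`. Domination is additive, and,
by `2 (p q - x y) = (p - x)(q + y) + (p + x)(q - y)`, multiplicative. Since `s - 1 ∈ S`, the powers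
of `s` increase, so the elements dominated by some `λ s^k` form a subalgebra. Each generator `y_j`
is dominated by `a_j`, hence by `s`, so this subalgebra is everything; and `x = λ s^k - (λ s^k - x)`
exhibits `A = S - S`.
-/

namespace Subsemiring

variable {A : Type*} [CommRing A]

def Dominates (T : Subsemiring A) (p x : A) : Prop := p - x ∈ T ∧ p + x ∈ T

namespace Dominates

variable {T : Subsemiring A} {p q x y : A}

theorem of_sub_mem (h : T.Dominates p x) (hpq : q - p ∈ T) : T.Dominates q x := by
  constructor <;> [convert add_mem hpq h.1 using 1; convert add_mem hpq h.2 using 1] <;> abel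

theorem add (hx : T.Dominates p x) (hy : T.Dominates q y) : T.Dominates (p + q) (x + y) := by
  constructor
  · simpa [add_sub_add_comm] using add_mem hx.1 hy.1
  · simpa [add_add_add_comm] using add_mem hx.2 hy.2

theorem mul [Module ℝ A] (hsmul : ∀ r : ℝ, 0 ≤ r → ∀ z ∈ T, r • z ∈ T)
    (hx : T.Dominates p x) (hy : T.Dominates q y) : T.Dominates (p * q) (x * y) := by
  have half_mem : ∀ w : A, 2 * w ∈ T → w ∈ T := fun w hw => by
    have := hsmul (2 : ℝ)⁻¹ (by norm_num) _ hw
    rwa [two_mul, ← two_smul ℝ, inv_smul_smul₀ two_ne_zero] at this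
  constructor
  · refine half_mem _ ?_
    convert add_mem (mul_mem hx.1 hy.2) (mul_mem hx.2 hy.1) using 1
    ring
  · refine half_mem _ ?_
    convert add_mem (mul_mem hx.1 hy.1) (mul_mem hx.2 hy.2) using 1
    ring

end Dominates

theorem pow_sub_pow_mem {T : Subsemiring A} {s : A} (hs : s - 1 ∈ T) {k m : ℕ} (hkm : k ≤ m) :
    s ^ m - s ^ k ∈ T := by
  have hsT : s ∈ T := by simpa using add_mem hs T.one_mem
  induction m, hkm using Nat.le_induction with
  | base => simp
  | succ m _ ih =>
    rw [show s ^ (m + 1) - s ^ k = s ^ m * (s - 1) + (s ^ m - s ^ k) by ring]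
    exact add_mem (mul_mem (pow_mem hsT m) hs) ih

variable [Algebra ℝ A] (T : Subsemiring A)

theorem dominates_algebraMap (hsmul : ∀ r : ℝ, 0 ≤ r → ∀ z ∈ T, r • z ∈ T) (r : ℝ) :
    T.Dominates ((|r| + 1) • 1) (algebraMap ℝ A r) := by
  unfold Dominates
  rw [Algebra.algebraMap_eq_smul_one, ← sub_smul, ← add_smul]
  exact ⟨hsmul _ (by linarith [le_abs_self r]) _ T.one_mem,
    hsmul _ (by linarith [neg_abs_le r]) _ T.one_mem⟩

/-- `s` is cofinal for `T` exactly when this subalgebra is `⊤`. -/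
def dominatedSubalgebra (hsmul : ∀ r : ℝ, 0 ≤ r → ∀ z ∈ T, r • z ∈ T) {s : A} (hs : s - 1 ∈ T) :
    Subalgebra ℝ A where
  carrier := {x | ∃ l : ℝ, 0 < l ∧ ∃ k : ℕ, T.Dominates (l • s ^ k) x}
  algebraMap_mem' r := ⟨|r| + 1, by positivity, 0, by simpa using T.dominates_algebraMap hsmul r⟩
  one_mem' := ⟨|1| + 1, by positivity, 0, by simpa using T.dominates_algebraMap hsmul 1⟩
  zero_mem' := ⟨|0| + 1, by positivity, 0, by simpa using T.dominates_algebraMap hsmul 0⟩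
  add_mem' := by
    rintro x y ⟨l₁, hl₁, k₁, hx⟩ ⟨l₂, hl₂, k₂, hy⟩
    have raise : ∀ {l : ℝ} {k : ℕ}, 0 < l → k ≤ max k₁ k₂ → l • s ^ max k₁ k₂ - l • s ^ k ∈ T :=
      fun hl hk => by rw [← smul_sub]; exact hsmul _ hl.le _ (pow_sub_pow_mem hs hk)
    refine ⟨l₁ + l₂, add_pos hl₁ hl₂, max k₁ k₂, ?_⟩
    rw [add_smul]
    exact (hx.of_sub_mem (raise hl₁ (le_max_left _ _))).add
      (hy.of_sub_mem (raise hl₂ (le_max_right _ _)))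
  mul_mem' := by
    rintro x y ⟨l₁, hl₁, k₁, hx⟩ ⟨l₂, hl₂, k₂, hy⟩
    refine ⟨l₁ * l₂, mul_pos hl₁ hl₂, k₁ + k₂, ?_⟩
    rw [pow_add, ← smul_mul_smul_comm]
    exact hx.mul hsmul hy

end Subsemiring

theorem stmt_12 {A : Type*} [CommRing A] [Algebra ℝ A] (S : Set A)
    (hone : (1 : A) ∈ S)
    (hadd : ∀ x ∈ S, ∀ y ∈ S, x + y ∈ S)
    (hsmul : ∀ r : ℝ, 0 ≤ r → ∀ x ∈ S, r • x ∈ S)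
    (hmul : ∀ x ∈ S, ∀ y ∈ S, x * y ∈ S)
    (n : ℕ) (y : Fin n → A)
    (hgen : Algebra.adjoin ℝ (Set.range y) = ⊤)
    (a : Fin n → A) (ha : ∀ j, a j ∈ S)
    (h1 : ∀ j, a j - y j ∈ S) (h2 : ∀ j, a j + y j ∈ S) :
    (∀ x : A, ∃ u ∈ S, ∃ v ∈ S, x = u - v) ∧
    (∀ x : A, ∃ l : ℝ, 0 < l ∧ ∃ k : ℕ,
      l • (1 + ∑ j : Fin n, a j) ^ k - x ∈ S) := by
  let T : Subsemiring A :=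
    { carrier := S, one_mem' := hone, mul_mem' := fun hx hy => hmul _ hx _ hy,
      add_mem' := fun hx hy => hadd _ hx _ hy
      zero_mem' := by simpa using hsmul 0 le_rfl 1 hone }
  have hsum : ∀ t : Finset (Fin n), ∑ j ∈ t, a j ∈ T := fun t => sum_mem fun j _ => ha j
  set s := 1 + ∑ j : Fin n, a j with hs_def
  have hs : s - 1 ∈ T := by simpa [hs_def] using hsum Finset.univ
  have hsT : s ∈ T := add_mem T.one_mem (hsum Finset.univ)
  have hy : ∀ j, T.Dominates s (y j) := fun j =>
    Subsemiring.Dominates.of_sub_mem (p := a j) ⟨h1 j, h2 j⟩ <| by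
      rw [show s - a j = 1 + ∑ i ∈ Finset.univ.erase j, a i by
        rw [hs_def, ← Finset.add_sum_erase _ _ (Finset.mem_univ j)]; ring]
      exact add_mem T.one_mem (hsum _)
  have htop : T.dominatedSubalgebra hsmul hs = ⊤ :=
    top_unique <| hgen ▸ Algebra.adjoin_le <| Set.range_subset_iff.2 fun j =>
      ⟨1, one_pos, 1, by simpa using hy j⟩
  have hx : ∀ x, x ∈ T.dominatedSubalgebra hsmul hs := fun x => htop ▸ Algebra.mem_top
  refine ⟨fun x => ?_, fun x => ?_⟩ <;> obtain ⟨l, hl, k, hlx, -⟩ := hx x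
  · exact ⟨l • s ^ k, hsmul l hl.le _ (pow_mem hsT k), _, hlx, (sub_sub_cancel _ _).symm⟩
  · exact ⟨l, hl, k, hlx⟩
end

section
/- Let S be a semiring of A and s ∈ 1 + S a cofinal element. Then S† = {a ∈ A : there exists n ∈ ℕ such that a + ε s^n ∈ S for all ε > 0}. -/
/-! A witness `b` of `a ∈ S†` can be replaced by anything dominating it: if `l • t - b ∈ S`, then
`a + ε • t = (a + (ε / l) • b) + (ε / l) • (l • t - b)`. Cofinality of `s` provides such a
dominating `l • s ^ k` for every `b`; conversely the powers of `s = (s - 1) + 1` lie in `S`. -/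

theorem add_smul_mem_of_smul_sub_mem {M : Type*} [AddCommGroup M] [Module ℝ M] {S : Set M}
    (hadd : ∀ x ∈ S, ∀ y ∈ S, x + y ∈ S)
    (hsmul : ∀ r : ℝ, 0 ≤ r → ∀ x ∈ S, r • x ∈ S) {a b t : M} {l : ℝ} (hl : 0 < l)
    (hlt : l • t - b ∈ S) (hab : ∀ ε : ℝ, 0 < ε → a + ε • b ∈ S) :
    ∀ ε : ℝ, 0 < ε → a + ε • t ∈ S := by
  intro ε hε
  have hsum := hadd _ (hab (ε / l) (by positivity)) _ (hsmul (ε / l) (by positivity) _ hlt)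
  have heq : a + (ε / l) • b + (ε / l) • (l • t - b) = a + ε • t := by
    rw [smul_sub, smul_smul, div_mul_cancel₀ _ hl.ne']
    abel
  rwa [heq] at hsum

theorem pow_mem_of_sub_one_mem {R : Type*} [Ring R] {S : Set R} (hone : (1 : R) ∈ S)
    (hadd : ∀ x ∈ S, ∀ y ∈ S, x + y ∈ S) (hmul : ∀ x ∈ S, ∀ y ∈ S, x * y ∈ S) {s : R} (hs : s - 1 ∈ S) (n : ℕ) :
    s ^ n ∈ S := by
  have hs' : s ∈ S := by simpa using hadd _ hs _ hone
  induction n with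
  | zero => simpa using hone
  | succ n ih => simpa [pow_succ] using hmul _ ih _ hs'

theorem stmt_13 {A : Type*} [CommRing A] [Algebra ℝ A] (S : Set A)
    (hone : (1 : A) ∈ S)
    (hadd : ∀ x ∈ S, ∀ y ∈ S, x + y ∈ S)
    (hsmul : ∀ r : ℝ, 0 ≤ r → ∀ x ∈ S, r • x ∈ S)
    (hmul : ∀ x ∈ S, ∀ y ∈ S, x * y ∈ S)
    (s : A) (hs : s - 1 ∈ S)
    (hcofinal : ∀ a : A, ∃ l : ℝ, 0 < l ∧ ∃ k : ℕ, l • s ^ k - a ∈ S) :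
    {a : A | ∃ b ∈ S, ∀ ε : ℝ, 0 < ε → a + ε • b ∈ S}
      = {a : A | ∃ n : ℕ, ∀ ε : ℝ, 0 < ε → a + ε • s ^ n ∈ S} := by
  ext a
  constructor
  · rintro ⟨b, -, hab⟩
    obtain ⟨l, hl, k, hk⟩ := hcofinal b
    exact ⟨k, add_smul_mem_of_smul_sub_mem hadd hsmul hl hk hab⟩
  · rintro ⟨n, hn⟩
    exact ⟨s ^ n, pow_mem_of_sub_one_mem hone hadd hmul hs n, hn⟩
end

section
/- Let A be a filtered commutative unital ℝ-algebra with filtration (A^(k))_{k∈ℕ₀}. Define A^(0)_0 := {0} and, for k ≥ 1, A^(k)_0 := {a ∈ A^(k) : ∃m ∈ ℕ with a^m ∈ A^(km-1)}. Then A^(k)_0 is a linear subspace of A^(k) for every k, and A^(k)_0 · A^(ℓ) ⊆ A^(k+ℓ)_0 for all k, ℓ ∈ ℕ₀. -/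
/-!
For `k ≥ 1`, `powerDrop F k` is `A^(k)_0`. If `a ∈ A^(k)` and `a^m ∈ A^(km-1)`, then
`a^i ∈ A^(ki-1)` for every `i ≥ m`, since `a^i = a^m a^(i-m)`. Hence for `a, b ∈ A^(k)_0` with
exponents `m` and `n`, every binomial term `a^i b^j` of `(a + b)^(m+n-1)` has `i ≥ m` or `j ≥ n`
and so lies in `A^(k(m+n-1)-1)`. For the ideal-like property, `(ab)^m = a^m b^m` lies in
`A^(km-1+lm) = A^((k+l)m-1)`.
-/

section

variable {R A : Type*} [CommSemiring R] [CommSemiring A] [Algebra R A] {F : ℕ → Submodule R A}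
  {k : ℕ} {a b : A}

variable (F) in
def powerDrop (k : ℕ) : Set A :=
  {a | a ∈ F k ∧ ∃ m : ℕ, 1 ≤ m ∧ a ^ m ∈ F (k * m - 1)}

theorem smul_mem_powerDrop (c : R) (ha : a ∈ powerDrop F k) : c • a ∈ powerDrop F k := by
  obtain ⟨haF, m, hm, ham⟩ := ha
  exact ⟨Submodule.smul_mem _ c haF, m, hm, smul_pow c a m ▸ Submodule.smul_mem _ _ ham⟩

theorem zero_mem_powerDrop : (0 : A) ∈ powerDrop F k :=
  ⟨zero_mem _, 1, le_rfl, by simp⟩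

variable [SetLike.GradedMonoid F]

theorem pow_mul_pow_mem_of_le (hF : Monotone F) (hk : 1 ≤ k) (ha : a ∈ F k) (hb : b ∈ F k)
    {m : ℕ} (hm : 1 ≤ m) (ham : a ^ m ∈ F (k * m - 1)) {i : ℕ} (hi : m ≤ i) (j : ℕ) :
    a ^ i * b ^ j ∈ F (k * (i + j) - 1) := by
  obtain ⟨t, rfl⟩ := Nat.exists_eq_add_of_le hi
  have hmem : a ^ (m + t) * b ^ j ∈ F (k * m - 1 + (t • k + j • k)) := by
    rw [pow_add, mul_assoc]
    exact SetLike.mul_mem_graded ham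
      (SetLike.mul_mem_graded (SetLike.pow_mem_graded t ha) (SetLike.pow_mem_graded j hb))
  refine hF ?_ hmem
  have hkm : 1 ≤ k * m := Nat.mul_pos hk hm
  have hexpand : k * (m + t + j) = k * m + t * k + j * k := by ring
  simp only [smul_eq_mul]
  omega

theorem add_mem_powerDrop (hF : Monotone F) (hk : 1 ≤ k) (ha : a ∈ powerDrop F k)
    (hb : b ∈ powerDrop F k) : a + b ∈ powerDrop F k := by
  obtain ⟨haF, m, hm, ham⟩ := ha
  obtain ⟨hbF, n, hn, hbn⟩ := hb
  refine ⟨add_mem haF hbF, m + n - 1, by omega, ?_⟩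
  rw [(Commute.all a b).add_pow']
  refine sum_mem fun ⟨i, j⟩ hij => nsmul_mem ?_ _
  rw [Finset.HasAntidiagonal.mem_antidiagonal] at hij
  rw [← hij]
  rcases le_or_gt m i with hi | hi
  · exact pow_mul_pow_mem_of_le hF hk haF hbF hm ham hi j
  · rw [mul_comm (a ^ i), add_comm i]
    exact pow_mul_pow_mem_of_le hF hk hbF haF hn hbn (by omega) i

variable (F) in
def powerDropSubmodule (hF : Monotone F) (hk : 1 ≤ k) : Submodule R A where
  carrier := powerDrop F k
  zero_mem' := zero_mem_powerDrop
  add_mem' := add_mem_powerDrop hF hk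
  smul_mem' c _ := smul_mem_powerDrop c

theorem mul_mem_powerDrop (hF : Monotone F) (hk : 1 ≤ k) {l : ℕ} (ha : a ∈ powerDrop F k)
    (hb : b ∈ F l) : a * b ∈ powerDrop F (k + l) := by
  obtain ⟨haF, m, hm, ham⟩ := ha
  refine ⟨SetLike.mul_mem_graded haF hb, m, hm, ?_⟩
  rw [mul_pow]
  refine hF ?_ (SetLike.mul_mem_graded ham (SetLike.pow_mem_graded m hb))
  have hkm : 1 ≤ k * m := Nat.mul_pos hk hm
  have hexpand : (k + l) * m = k * m + m * l := by ring
  simp only [smul_eq_mul]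
  omega

end

theorem stmt_15_general {A : Type*} [CommRing A] [Algebra ℝ A]
    (F : ℕ → Submodule ℝ A)
    (hone : (1 : A) ∈ F 0)
    (hmono : ∀ k : ℕ, F k ≤ F (k + 1))
    (hmul : ∀ k l : ℕ, ∀ a b : A, a ∈ F k → b ∈ F l → a * b ∈ F (k + l))
    (F0 : ℕ → Set A)
    (hF00 : F0 0 = {0})
    (hF0k : ∀ k : ℕ, 1 ≤ k →
      F0 k = {a : A | a ∈ F k ∧ ∃ m : ℕ, 1 ≤ m ∧ a ^ m ∈ F (k * m - 1)}) :
    (∀ k : ℕ, ∃ W : Submodule ℝ A, (W : Set A) = F0 k ∧ W ≤ F k) ∧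
    (∀ k l : ℕ, ∀ a b : A, a ∈ F0 k → b ∈ F l → a * b ∈ F0 (k + l)) := by
  have : SetLike.GradedMonoid F :=
    { one_mem := hone, mul_mem := fun _ _ _ _ ha hb => hmul _ _ _ _ ha hb }
  have hF : Monotone F := monotone_nat_of_le_succ hmono
  have hF0 : ∀ k, 1 ≤ k → F0 k = powerDrop F k := hF0k
  have hsub : ∀ k : ℕ, ∃ W : Submodule ℝ A, (W : Set A) = F0 k ∧ W ≤ F k := by
    intro k
    rcases Nat.eq_zero_or_pos k with rfl | hk
    · exact ⟨⊥, by simp [hF00], bot_le⟩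
    · exact ⟨powerDropSubmodule F hF hk, (hF0 k hk).symm,
        fun _ h => (show _ ∈ powerDrop F k from h).1⟩
  refine ⟨hsub, fun k l a b ha hb => ?_⟩
  rcases Nat.eq_zero_or_pos k with rfl | hk
  · rw [hF00, Set.mem_singleton_iff] at ha
    obtain ⟨W, hW, -⟩ := hsub (0 + l)
    rw [ha, zero_mul, ← hW]
    exact W.zero_mem
  · rw [hF0 k hk] at ha
    rw [hF0 (k + l) (by omega)]
    exact mul_mem_powerDrop hF hk ha hb

theorem stmt_15 {A : Type*} [CommRing A] [Algebra ℝ A]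
    (F : ℕ → Submodule ℝ A)
    (hone : (1 : A) ∈ F 0)
    (hmono : ∀ k : ℕ, F k ≤ F (k + 1))
    (hmul : ∀ k l : ℕ, ∀ a b : A, a ∈ F k → b ∈ F l → a * b ∈ F (k + l))
    (hcover : ∀ a : A, ∃ k : ℕ, a ∈ F k)
    (F0 : ℕ → Set A)
    (hF00 : F0 0 = {0})
    (hF0k : ∀ k : ℕ, 1 ≤ k →
      F0 k = {a : A | a ∈ F k ∧ ∃ m : ℕ, 1 ≤ m ∧ a ^ m ∈ F (k * m - 1)}) :
    (∀ k : ℕ, ∃ W : Submodule ℝ A, (W : Set A) = F0 k ∧ W ≤ F k) ∧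
    (∀ k l : ℕ, ∀ a b : A, a ∈ F0 k → b ∈ F l → a * b ∈ F0 (k + l)) :=
  stmt_15_general F hone hmono hmul F0 hF00 hF0k
end

section
/- Let A be a filtered commutative unital ℝ-algebra and A[z]^bd the unital subalgebra of the polynomial algebra A[z] generated by ⋃_{k∈ℕ₀}{a z^k : a ∈ A^(k)}. If ρ : A[z]^bd → ℝ is a unital algebra homomorphism with ρ(z) ≠ 0, then there exists a unique unital algebra homomorphism ρ̂ : A → ℝ such that ρ(a z^k) = ρ̂(a) · ρ(z)^k for all k ∈ ℕ₀ and a ∈ A^(k). -/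
/-!
Since `C a * X ^ (k + m) = C a * X ^ k * X ^ m`, the quotient `ρ (C a * X ^ k) / ρ X ^ k` does not
depend on the degree `k` with `a ∈ F k`; it defines `ρ̂ a`. Each algebra-homomorphism law for `ρ̂`
is then checked after multiplying by a power of `ρ X`, at a degree where all elements involved are
admissible, where it becomes the corresponding law for `ρ` on monomials `C a * X ^ k`.
-/

open Polynomial

namespace BoundedPolynomial

section Monomials

variable {K A : Type*} [CommRing K] [CommRing A] [Algebra K A] {B : Subalgebra K A[X]}

lemma mk_C_mul_X_pow_add (hz : (X : A[X]) ∈ B) (a : A) (k m : ℕ)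
    (h : C a * X ^ (k + m) ∈ B) (h' : C a * X ^ k ∈ B) :
    (⟨C a * X ^ (k + m), h⟩ : B) = ⟨C a * X ^ k, h'⟩ * ⟨X, hz⟩ ^ m :=
  Subtype.ext <| by simp [pow_add, mul_assoc]

lemma mk_C_mul_X_pow_mul (a b : A) (k l : ℕ) (h : C (a * b) * X ^ (k + l) ∈ B)
    (ha : C a * X ^ k ∈ B) (hb : C b * X ^ l ∈ B) :
    (⟨C (a * b) * X ^ (k + l), h⟩ : B) = ⟨C a * X ^ k, ha⟩ * ⟨C b * X ^ l, hb⟩ :=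
  Subtype.ext <| by simp only [MulMemClass.mk_mul_mk, map_mul, pow_add]; ring

lemma mk_C_add_mul_X_pow (a b : A) (k : ℕ) (h : C (a + b) * X ^ k ∈ B)
    (ha : C a * X ^ k ∈ B) (hb : C b * X ^ k ∈ B) :
    (⟨C (a + b) * X ^ k, h⟩ : B) = ⟨C a * X ^ k, ha⟩ + ⟨C b * X ^ k, hb⟩ :=
  Subtype.ext <| by simp [add_mul]

lemma mk_C_smul_mul_X_pow (r : K) (a : A) (k : ℕ) (h : C (r • a) * X ^ k ∈ B)
    (ha : C a * X ^ k ∈ B) :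
    (⟨C (r • a) * X ^ k, h⟩ : B) = r • ⟨C a * X ^ k, ha⟩ :=
  Subtype.ext <| by simp only [SetLike.val_smul, ← smul_C, smul_mul_assoc]

lemma mk_C_one_mul_X_pow_zero (h : C (1 : A) * X ^ 0 ∈ B) : (⟨C 1 * X ^ 0, h⟩ : B) = 1 :=
  Subtype.ext <| by simp

end Monomials

variable {K A L : Type*} [CommRing K] [CommRing A] [Algebra K A] [Field L] [Algebra K L]
  {F : ℕ → Submodule K A} {B : Subalgebra K A[X]}
  (hmem : ∀ (k : ℕ) (a : A), a ∈ F k → (C a * X ^ k : A[X]) ∈ B)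
  (ρ : B →ₐ[K] L) (hz : (X : A[X]) ∈ B)

lemma map_mk_mul_pow_comm (a : A) (k l : ℕ) (hk : a ∈ F k) (hl : a ∈ F l) :
    ρ ⟨C a * X ^ k, hmem k a hk⟩ * ρ ⟨X, hz⟩ ^ l =
      ρ ⟨C a * X ^ l, hmem l a hl⟩ * ρ ⟨X, hz⟩ ^ k := by
  wlog hkl : k ≤ l generalizing k l
  · exact (this l k hl hk (le_of_not_ge hkl)).symm
  obtain ⟨m, rfl⟩ := Nat.exists_eq_add_of_le hkl
  rw [mk_C_mul_X_pow_add hz a k m _ (hmem k a hk), map_mul, map_pow, pow_add]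
  ring

/-- The paper's `ρ̂`, evaluated at a chosen degree `k` with `a ∈ F k`; by `map_mk_mul_pow_comm`
the choice does not matter. -/
noncomputable def descendFun (hcover : ∀ a : A, ∃ k : ℕ, a ∈ F k) (a : A) : L :=
  ρ ⟨C a * X ^ (hcover a).choose, hmem _ a (hcover a).choose_spec⟩ /
    ρ ⟨X, hz⟩ ^ (hcover a).choose

lemma descendFun_mul_pow (hcover : ∀ a : A, ∃ k : ℕ, a ∈ F k) (hρz : ρ ⟨X, hz⟩ ≠ 0)
    (k : ℕ) (a : A) (h : a ∈ F k) :
    descendFun hmem ρ hz hcover a * ρ ⟨X, hz⟩ ^ k = ρ ⟨C a * X ^ k, hmem k a h⟩ := by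
  have hpow : ρ ⟨X, hz⟩ ^ (hcover a).choose ≠ 0 := pow_ne_zero _ hρz
  rw [descendFun, div_mul_eq_mul_div, div_eq_iff hpow,
    map_mk_mul_pow_comm hmem ρ hz a _ k (hcover a).choose_spec h]

lemma descendFun_eq_of_mul_pow (hcover : ∀ a : A, ∃ k : ℕ, a ∈ F k) (hρz : ρ ⟨X, hz⟩ ≠ 0)
    {k : ℕ} {a : A} (h : a ∈ F k) {c : L} (hc : c * ρ ⟨X, hz⟩ ^ k = ρ ⟨C a * X ^ k, hmem k a h⟩) :
    descendFun hmem ρ hz hcover a = c :=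
  mul_right_cancel₀ (pow_ne_zero k hρz) <|
    (descendFun_mul_pow hmem ρ hz hcover hρz k a h).trans hc.symm

noncomputable def descend (hone : (1 : A) ∈ F 0) (hmono : ∀ k : ℕ, F k ≤ F (k + 1))
    (hmulF : ∀ k l : ℕ, ∀ a b : A, a ∈ F k → b ∈ F l → a * b ∈ F (k + l))
    (hcover : ∀ a : A, ∃ k : ℕ, a ∈ F k) (hρz : ρ ⟨X, hz⟩ ≠ 0) : A →ₐ[K] L :=
  AlgHom.ofLinearMap
    { toFun := descendFun hmem ρ hz hcover
      map_add' := fun a b => by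
        obtain ⟨k, hk⟩ := hcover a
        obtain ⟨l, hl⟩ := hcover b
        have hFmono : Monotone F := monotone_nat_of_le_succ hmono
        have ha := hFmono (le_max_left k l) hk
        have hb := hFmono (le_max_right k l) hl
        refine descendFun_eq_of_mul_pow hmem ρ hz hcover hρz (add_mem ha hb) ?_
        rw [add_mul, descendFun_mul_pow hmem ρ hz hcover hρz _ a ha,
          descendFun_mul_pow hmem ρ hz hcover hρz _ b hb, ← map_add, mk_C_add_mul_X_pow]
      map_smul' := fun r a => by
        obtain ⟨k, hk⟩ := hcover a
        refine descendFun_eq_of_mul_pow hmem ρ hz hcover hρz (Submodule.smul_mem _ r hk) ?_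
        rw [RingHom.id_apply, smul_mul_assoc, descendFun_mul_pow hmem ρ hz hcover hρz k a hk,
          ← map_smul, mk_C_smul_mul_X_pow] }
    (descendFun_eq_of_mul_pow hmem ρ hz hcover hρz hone <| by
      rw [pow_zero, mul_one, mk_C_one_mul_X_pow_zero, map_one])
    (fun a b => by
      obtain ⟨k, hk⟩ := hcover a
      obtain ⟨l, hl⟩ := hcover b
      refine descendFun_eq_of_mul_pow hmem ρ hz hcover hρz (hmulF k l a b hk hl) ?_
      rw [LinearMap.coe_mk, AddHom.coe_mk, pow_add, mul_mul_mul_comm,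
        descendFun_mul_pow hmem ρ hz hcover hρz k a hk,
        descendFun_mul_pow hmem ρ hz hcover hρz l b hl, ← map_mul, mk_C_mul_X_pow_mul])

end BoundedPolynomial

open BoundedPolynomial in
theorem stmt_16_general {A : Type*} [CommRing A] [Algebra ℝ A]
    (F : ℕ → Submodule ℝ A)
    (hone : (1 : A) ∈ F 0)
    (hmono : ∀ k : ℕ, F k ≤ F (k + 1))
    (hmulF : ∀ k l : ℕ, ∀ a b : A, a ∈ F k → b ∈ F l → a * b ∈ F (k + l))
    (hcover : ∀ a : A, ∃ k : ℕ, a ∈ F k)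
    (B : Subalgebra ℝ (Polynomial A))
    (hz : (X : Polynomial A) ∈ B)
    (hmem : ∀ (k : ℕ) (a : A), a ∈ F k → (Polynomial.C a * X ^ k : Polynomial A) ∈ B)
    (ρ : B →ₐ[ℝ] ℝ)
    (hρz : ρ ⟨X, hz⟩ ≠ 0) :
    ∃! ρhat : A →ₐ[ℝ] ℝ, ∀ (k : ℕ) (a : A) (h : a ∈ F k),
      ρ ⟨Polynomial.C a * X ^ k, hmem k a h⟩ = ρhat a * (ρ ⟨X, hz⟩) ^ k := by
  refine ⟨descend hmem ρ hz hone hmono hmulF hcover hρz,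
    fun k a h => (descendFun_mul_pow hmem ρ hz hcover hρz k a h).symm, fun g hg => ?_⟩
  ext a
  obtain ⟨k, hk⟩ := hcover a
  exact (descendFun_eq_of_mul_pow hmem ρ hz hcover hρz hk (hg k a hk).symm).symm

theorem stmt_16 {A : Type*} [CommRing A] [Algebra ℝ A]
    (F : ℕ → Submodule ℝ A)
    (hone : (1 : A) ∈ F 0)
    (hmono : ∀ k : ℕ, F k ≤ F (k + 1))
    (hmulF : ∀ k l : ℕ, ∀ a b : A, a ∈ F k → b ∈ F l → a * b ∈ F (k + l))
    (hcover : ∀ a : A, ∃ k : ℕ, a ∈ F k)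
    (B : Subalgebra ℝ (Polynomial A))
    (hB : B = Algebra.adjoin ℝ
      {p : Polynomial A | ∃ (k : ℕ) (a : A), a ∈ F k ∧ p = Polynomial.C a * X ^ k})
    (hz : (X : Polynomial A) ∈ B)
    (hmem : ∀ (k : ℕ) (a : A), a ∈ F k → (Polynomial.C a * X ^ k : Polynomial A) ∈ B)
    (ρ : B →ₐ[ℝ] ℝ)
    (hρz : ρ ⟨X, hz⟩ ≠ 0) :
    ∃! ρhat : A →ₐ[ℝ] ℝ, ∀ (k : ℕ) (a : A) (h : a ∈ F k),
      ρ ⟨Polynomial.C a * X ^ k, hmem k a h⟩ = ρhat a * (ρ ⟨X, hz⟩) ^ k :=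
  stmt_16_general F hone hmono hmulF hcover B hz hmem ρ hρz
end
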